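/- Let θ > 0 and let β : (0,1) → [0,∞) be continuous with ∫_0^1 z β(z) dz = 1 and satisfying θ ∫_z^1 y β(y) dy = z(1−z) β(z) for all z ∈ (0,1). Then β(z) = θ z^{−1} (1−z)^{θ−1} for all z ∈ (0,1). (This identifies the frequency spectrum of the Wright-Fisher infinitely-many-alleles model.) -/

import Mathlib

/-!
The tail `F z = ∫_z^1 y β(y) dy` has `F' z = -z β(z)`, so the hypothesis is the linear ODE
`(1 - z) F' = -θ F` on `(0,1)`. Hence `F (1 - z)^{-θ}` is constant, `F z = c (1 - z)^θ`, and
feeding this back into the hypothesis gives `z β(z) = c θ (1 - z)^{θ-1}`; the normalization forces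
`c = 1`.
-/

open MeasureTheory Set Topology

theorem hasDerivAt_setIntegral_Ioo_left {E : Type*} [NormedAddCommGroup E] [NormedSpace ℝ E]
    [CompleteSpace E] {f : ℝ → E} {a b x : ℝ} (hf : IntegrableOn f (Ioo a b))
    (hx : x ∈ Ioo a b) (hfm : StronglyMeasurableAtFilter f (𝓝 x)) (hfx : ContinuousAt f x) :
    HasDerivAt (fun t ↦ ∫ y in Ioo t b, f y) (-f x) x := by
  have hint : IntervalIntegrable f volume x b := by
    rw [intervalIntegrable_iff_integrableOn_Ioc_of_le hx.2.le, integrableOn_Ioc_iff_integrableOn_Ioo]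
    exact hf.mono_set (Ioo_subset_Ioo_left hx.1.le)
  refine (intervalIntegral.integral_hasDerivAt_left hint hfm hfx).congr_of_eventuallyEq ?_
  filter_upwards [Iio_mem_nhds hx.2] with t ht
  rw [intervalIntegral.integral_of_le (le_of_lt ht), integral_Ioc_eq_integral_Ioo]

theorem IsOpen.exists_eq_mul_one_sub_rpow_of_hasDerivAt {F : ℝ → ℝ} {θ : ℝ} {s : Set ℝ}
    (hs : IsOpen s) (hs' : IsPreconnected s) (hs1 : s ⊆ Iio 1)
    (hF : ∀ x ∈ s, HasDerivAt F (-θ * F x / (1 - x)) x) :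
    ∃ c, ∀ x ∈ s, F x = c * (1 - x) ^ θ := by
  have hG : ∀ x ∈ s, HasDerivAt (fun t ↦ F t * (1 - t) ^ (-θ)) 0 x := by
    intro x hx
    have hx1 : 0 < 1 - x := sub_pos.2 (hs1 hx)
    refine ((hF x hx).mul (((hasDerivAt_id x).const_sub 1).rpow_const (p := -θ)
      (Or.inl hx1.ne'))).congr_deriv ?_
    rw [id, Real.rpow_sub_one hx1.ne']
    field_simp
    ring
  obtain ⟨c, hc⟩ := hs.exists_is_const_of_deriv_eq_zero hs'
    (fun x hx ↦ (hG x hx).differentiableAt.differentiableWithinAt)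
    (fun x hx ↦ (hG x hx).deriv)
  refine ⟨c, fun x hx ↦ ?_⟩
  have hx1 : 0 < 1 - x := sub_pos.2 (hs1 hx)
  rw [← hc x hx, mul_assoc, ← Real.rpow_add hx1, neg_add_cancel, Real.rpow_zero, mul_one]

theorem integral_Ioo_mul_one_sub_rpow {θ : ℝ} (hθ : 0 < θ) :
    ∫ z in Ioo (0 : ℝ) 1, θ * (1 - z) ^ (θ - 1) = 1 := by
  rw [← integral_Ioc_eq_integral_Ioo, ← intervalIntegral.integral_of_le zero_le_one,
    intervalIntegral.integral_comp_sub_left (fun z ↦ θ * z ^ (θ - 1)),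
    intervalIntegral.integral_const_mul, integral_rpow (Or.inl (by linarith))]
  simp [Real.zero_rpow hθ.ne', hθ.ne']

theorem stmt15 (θ : ℝ) (hθ : 0 < θ) (β : ℝ → ℝ)
    (hc : ContinuousOn β (Set.Ioo (0:ℝ) 1))
    (hnorm : ∫ z in Set.Ioo (0:ℝ) 1, z * β z = 1)
    (heq : ∀ z ∈ Set.Ioo (0:ℝ) 1,
      θ * ∫ y in Set.Ioo z 1, y * β y = z * (1 - z) * β z) :
    ∀ z ∈ Set.Ioo (0:ℝ) 1, β z = θ * z⁻¹ * (1 - z) ^ (θ - 1) := by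
  have hg : IntegrableOn (fun y ↦ y * β y) (Ioo 0 1) :=
    Integrable.of_integral_ne_zero (by rw [hnorm]; exact one_ne_zero)
  have hgc : ContinuousOn (fun y ↦ y * β y) (Ioo 0 1) := continuousOn_id.mul hc
  have hF : ∀ x ∈ Ioo (0 : ℝ) 1, HasDerivAt (fun t ↦ ∫ y in Ioo t 1, y * β y)
      (-θ * (∫ y in Ioo x 1, y * β y) / (1 - x)) x := by
    intro x hx
    have hx1 : 1 - x ≠ 0 := (sub_pos.2 hx.2).ne'
    refine (hasDerivAt_setIntegral_Ioo_left hg hx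
      (hgc.stronglyMeasurableAtFilter isOpen_Ioo x hx)
      (hgc.continuousAt (isOpen_Ioo.mem_nhds hx))).congr_deriv ?_
    rw [neg_mul, neg_div, heq x hx]
    field_simp
  obtain ⟨c, hF_eq⟩ := isOpen_Ioo.exists_eq_mul_one_sub_rpow_of_hasDerivAt
    isPreconnected_Ioo (fun x hx ↦ hx.2) hF
  have hdensity : ∀ z ∈ Ioo (0 : ℝ) 1, z * β z = c * (θ * (1 - z) ^ (θ - 1)) := by
    intro z hz
    have hz1 : 0 < 1 - z := sub_pos.2 hz.2
    have hz_eq := heq z hz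
    rw [hF_eq z hz] at hz_eq
    rw [Real.rpow_sub_one hz1.ne']
    field_simp
    linear_combination -hz_eq
  have hc1 : c = 1 := by
    rw [← hnorm, setIntegral_congr_fun measurableSet_Ioo hdensity, integral_const_mul,
      integral_Ioo_mul_one_sub_rpow hθ, mul_one]
  intro z hz
  have h := hdensity z hz
  rw [hc1, one_mul] at h
  rw [mul_right_comm, ← h]
  field_simp [hz.1.ne']
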